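/- For any integer k ≥ 0, the subspace x × P_{k-1}³ of P_k³ has dimension dim(P_k³) − dim(P_{k+1}) + 1, i.e. 3·(k+1)(k+2)(k+3)/6 − (k+2)(k+3)(k+4)/6 + 1. -/

import Mathlib

open MvPolynomial

/-- Scalar polynomials of degree at most `n` (with `P_{-1} = {0}` for negative `n`). -/
noncomputable def Pscal (n : ℤ) : Submodule ℝ (MvPolynomial (Fin 3) ℝ) :=
  if 0 ≤ n then restrictTotalDegree (Fin 3) ℝ n.toNat else ⊥

/-- Vector polynomials of degree at most `n` in each component. -/
noncomputable def Pvec (n : ℤ) : Submodule ℝ (Fin 3 → MvPolynomial (Fin 3) ℝ) :=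
  Submodule.pi Set.univ fun _ : Fin 3 => Pscal n

/-- The linear map `q ↦ x × q(x)` on vector polynomials. -/
noncomputable def crossX : (Fin 3 → MvPolynomial (Fin 3) ℝ) →ₗ[ℝ]
    (Fin 3 → MvPolynomial (Fin 3) ℝ) where
  toFun q := fun i => X (i + 1) * q (i + 2) - X (i + 2) * q (i + 1)
  map_add' p q := by funext i; simp [mul_add]; ring
  map_smul' c p := by funext i; simp [mul_smul_comm, smul_sub]

/-! A polynomial field `q` with `x × q = 0` is `x p` for a polynomial `p`: from
`x₀ q₁ = x₁ q₀` and primality of `x₀` we get `q₀ = x₀ p`, and then `q = x p`. Hence the kernel of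
`x × ·` on `P_{k-1}³` is `x P_{k-2}`, and rank–nullity gives
`dim (x × P_{k-1}³) = 3 dim P_{k-1} − dim P_{k-2}` with `dim P_m = C(m+3, 3)`; by Pascal's rule this
equals `3 dim P_k − dim P_{k+1} + 1`. -/

namespace Finsupp

noncomputable def sumLeEquivSumEqCons (n m : ℕ) :
    {d : Fin n →₀ ℕ // (d.sum fun _ e => e) ≤ m} ≃
      {d : Fin (n + 1) →₀ ℕ // (d.sum fun _ e => e) = m} where
  toFun d := ⟨cons (m - d.1.sum fun _ e => e) d.1, by rw [sum_cons]; have := d.2; omega⟩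
  invFun d := ⟨d.1.tail, by
    have h := d.2
    rw [← cons_tail d.1, sum_cons] at h
    omega⟩
  left_inv d := by simp [tail_cons]
  right_inv := by
    rintro ⟨d, hd⟩
    rw [← cons_tail d, sum_cons] at hd
    ext1
    dsimp only
    conv_rhs => rw [← cons_tail d]
    congr 1
    omega

theorem natCard_sum_le (n m : ℕ) :
    Nat.card {d : Fin n →₀ ℕ // (d.sum fun _ e => e) ≤ m} = (m + n).choose n := by
  rw [Nat.card_congr ((sumLeEquivSumEqCons n m).trans (Sym.equivNatSum (Fin (n + 1)) m).symm),
    Nat.card_eq_fintype_card, Sym.card_sym_eq_choose, Fintype.card_fin,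
    show n + 1 + m - 1 = m + n by omega, Nat.choose_symm_add]

end Finsupp

theorem MvPolynomial.finrank_restrictTotalDegree_fin (R : Type*) [CommRing R]
    [StrongRankCondition R] (n m : ℕ) :
    Module.finrank R (restrictTotalDegree (Fin n) R m) = (m + n).choose n := by
  rw [restrictTotalDegree, Module.finrank_eq_nat_card_basis (basisRestrictSupport R _)]
  exact Finsupp.natCard_sum_le n m

theorem Submodule.finrank_map_add_finrank_inf_ker {K V W : Type*} [DivisionRing K]
    [AddCommGroup V] [Module K V] [AddCommGroup W] [Module K W] (f : V →ₗ[K] W)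
    (P : Submodule K V) [FiniteDimensional K P] :
    Module.finrank K (P.map f) + Module.finrank K (P ⊓ LinearMap.ker f : Submodule K V) =
      Module.finrank K P := by
  rw [← LinearMap.range_domRestrict, ← map_comap_subtype, finrank_map_subtype_eq,
    ← LinearMap.ker_domRestrict]
  exact LinearMap.finrank_range_add_finrank_ker _

noncomputable def Submodule.piUnivEquiv {R ι : Type*} {φ : ι → Type*} [Semiring R]
    [∀ i, AddCommMonoid (φ i)] [∀ i, Module R (φ i)] (p : ∀ i, Submodule R (φ i)) :
    Submodule.pi Set.univ p ≃ₗ[R] ∀ i, p i where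
  toFun q i := ⟨q.1 i, q.2 i (Set.mem_univ i)⟩
  map_add' _ _ := rfl
  map_smul' _ _ := rfl
  invFun v := ⟨fun i => v i, fun i _ => (v i).2⟩

theorem Nat.six_mul_choose_three (m : ℕ) :
    6 * (m + 3).choose 3 = (m + 1) * (m + 2) * (m + 3) := by
  have h := Nat.descFactorial_eq_factorial_mul_choose (m + 3) 3
  norm_num [Nat.descFactorial_succ, Nat.factorial, show m + 3 - 2 = m + 1 by omega] at h
  linarith

theorem Nat.choose_three_shift_identity (k : ℕ) :
    (k + 1).choose 3 + 3 * (k + 3).choose 3 + 1 = 3 * (k + 2).choose 3 + (k + 4).choose 3 := by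
  simp only [Nat.choose_succ_succ', Nat.choose_one_right, Nat.choose_zero_right]
  omega

theorem Pscal_of_nonneg {n : ℤ} (hn : 0 ≤ n) : Pscal n = restrictTotalDegree (Fin 3) ℝ n.toNat :=
  if_pos hn

theorem Pscal_of_neg {n : ℤ} (hn : n < 0) : Pscal n = ⊥ :=
  if_neg (by omega)

instance (n : ℤ) : FiniteDimensional ℝ (Pscal n) := by
  rcases lt_or_ge n 0 with hn | hn
  · rw [Pscal_of_neg hn]; infer_instance
  · rw [Pscal_of_nonneg hn]; infer_instance

theorem finrank_Pscal (n : ℤ) : Module.finrank ℝ (Pscal n) = (n + 3).toNat.choose 3 := by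
  rcases lt_or_ge n 0 with hn | hn
  · rw [Pscal_of_neg hn, finrank_bot, Nat.choose_eq_zero_of_lt (by omega)]
  · rw [Pscal_of_nonneg hn, finrank_restrictTotalDegree_fin,
      show (n + 3).toNat = n.toNat + 3 by omega]

theorem X_mul_mem_Pscal_iff (i : Fin 3) {n : ℤ} {p : MvPolynomial (Fin 3) ℝ} :
    X i * p ∈ Pscal n ↔ p ∈ Pscal (n - 1) := by
  rcases eq_or_ne p 0 with rfl | hp
  · simp only [mul_zero, zero_mem]
  have hdeg : (X i * p).totalDegree = p.totalDegree + 1 := by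
    rw [totalDegree_mul_of_isDomain (X_ne_zero i) hp, totalDegree_X, add_comm]
  have hXp : X i * p ≠ 0 := mul_ne_zero (X_ne_zero i) hp
  unfold Pscal
  split_ifs <;>
    simp only [mem_restrictTotalDegree, Submodule.mem_bot, hdeg, hXp, hp, iff_false, false_iff,
      not_le] <;>
    omega

theorem mem_Pvec {n : ℤ} {q : Fin 3 → MvPolynomial (Fin 3) ℝ} :
    q ∈ Pvec n ↔ ∀ i, q i ∈ Pscal n := by
  simp [Pvec, Submodule.mem_pi]

theorem finrank_Pvec (n : ℤ) : Module.finrank ℝ (Pvec n) = 3 * Module.finrank ℝ (Pscal n) := by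
  rw [Pvec, (Submodule.piUnivEquiv _).finrank_eq, Module.finrank_pi_fintype, Finset.sum_const,
    Finset.card_univ, Fintype.card_fin, smul_eq_mul]

instance (n : ℤ) : FiniteDimensional ℝ (Pvec n) :=
  Module.Finite.equiv (Submodule.piUnivEquiv fun _ : Fin 3 => Pscal n).symm

noncomputable def mulX : MvPolynomial (Fin 3) ℝ →ₗ[ℝ] Fin 3 → MvPolynomial (Fin 3) ℝ :=
  LinearMap.pi fun i => LinearMap.mulLeft ℝ (X i)

theorem mulX_apply (p : MvPolynomial (Fin 3) ℝ) (i : Fin 3) : mulX p i = X i * p := rfl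

theorem mulX_injective : Function.Injective mulX := fun _ _ h =>
  mul_left_cancel₀ (X_ne_zero 0) (congrFun h 0)

theorem crossX_apply (q : Fin 3 → MvPolynomial (Fin 3) ℝ) (i : Fin 3) :
    crossX q i = X (i + 1) * q (i + 2) - X (i + 2) * q (i + 1) := rfl

theorem ker_crossX : LinearMap.ker crossX = LinearMap.range mulX := by
  refine le_antisymm (fun q hq => ?_) ?_
  · have h : ∀ i, X (i + 1) * q (i + 2) = X (i + 2) * q (i + 1) := fun i =>
      sub_eq_zero.mp (congrFun hq i)
    have h01 : X 0 * q 1 = X 1 * q 0 := h 2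
    have h02 : X 0 * q 2 = X 2 * q 0 := (h 1).symm
    obtain ⟨p, hp⟩ : X 0 ∣ q 0 := (X_prime.dvd_or_dvd ⟨q 1, h01.symm⟩).resolve_left (by simp)
    refine ⟨p, funext fun i => mul_left_cancel₀ (X_ne_zero 0) ?_⟩
    fin_cases i <;> simp only [Fin.isValue, Fin.zero_eta, Fin.mk_one, Fin.reduceFinMk, mulX_apply,
      h01, h02, hp] <;> ring
  · rintro _ ⟨p, rfl⟩
    refine LinearMap.mem_ker.mpr (funext fun i => ?_)
    simp only [crossX_apply, mulX_apply, Pi.zero_apply]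
    ring

theorem comap_mulX_Pvec (n : ℤ) : (Pvec n).comap mulX = Pscal (n - 1) := by
  ext p
  simp [mem_Pvec, mulX_apply, X_mul_mem_Pscal_iff]

theorem Pvec_inf_ker_crossX (n : ℤ) :
    Pvec n ⊓ LinearMap.ker crossX = (Pscal (n - 1)).map mulX := by
  rw [ker_crossX, inf_comm, ← Submodule.map_comap_eq, comap_mulX_Pvec]

theorem finrank_map_crossX_Pvec (n : ℤ) :
    Module.finrank ℝ ((Pvec n).map crossX) + Module.finrank ℝ (Pscal (n - 1)) =
      3 * Module.finrank ℝ (Pscal n) := by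
  rw [← finrank_Pvec, ← Submodule.finrank_map_add_finrank_inf_ker crossX (Pvec n),
    Pvec_inf_ker_crossX, (Submodule.equivMapOfInjective _ mulX_injective _).finrank_eq]

/-- `dim (x × P_{k-1}³) = dim P_k³ − dim P_{k+1} + 1`. -/
theorem dim_cross_space (k : ℕ) :
    (Module.finrank ℝ (Submodule.map crossX (Pvec ((k : ℤ) - 1))) : ℤ) =
      3 * ((k + 1) * (k + 2) * (k + 3)) / 6 - (k + 2) * (k + 3) * (k + 4) / 6 + 1 := by
  have hrank := finrank_map_crossX_Pvec ((k : ℤ) - 1)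
  rw [finrank_Pscal, finrank_Pscal, show ((k : ℤ) - 1 - 1 + 3).toNat = k + 1 by omega,
    show ((k : ℤ) - 1 + 3).toNat = k + 2 by omega] at hrank
  have h3 : ((k : ℤ) + 1) * (k + 2) * (k + 3) = 6 * (k + 3).choose 3 := by
    exact_mod_cast (Nat.six_mul_choose_three k).symm
  have h4 : ((k : ℤ) + 2) * (k + 3) * (k + 4) = 6 * (k + 4).choose 3 := by
    exact_mod_cast (Nat.six_mul_choose_three (k + 1)).symm
  have hpascal := Nat.choose_three_shift_identity k
  omega
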